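/- arXiv:0811.3729 — 3 statements merged into one kernel-verified Lean document; each statement's English description precedes it below -/
import Mathlib

section
/- Let R : ℝ² → ℝ be a smooth, radially symmetric, rapidly decaying function. Then ∫_{ℝ²} (Δ(R²))·R·(R + ρ ∂_ρ R) dξ = −2π ∫_0^∞ ((R²)'(ρ))² ρ dρ, where the right-hand side integral is over the radial variable ρ. -/
/-!
Write `R = w ∘ ‖·‖` and `u = w²`. Off the origin `Δ(R²) = u'' + u'/ρ` and `ξ · ∇R = ρ w'`, so in
polar coordinates the integral is `2π ∫₀^∞ (ρu')' (u + ρu'/2) dρ`. With `A = ρu'` the function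
`G = A (u + A/4)` has `G' = A' (u + A/2) + A u'` and vanishes at `0` and at `∞`, so the integral
equals `-2π ∫₀^∞ A u' dρ = -2π ∫₀^∞ ρ u'² dρ`.
-/

open MeasureTheory Set

noncomputable section

abbrev E2 : Type := EuclideanSpace ℝ (Fin 2)

/-- The Laplacian on `ℝ²`, as the trace of the second derivative. -/
def lap {F : Type*} [NormedAddCommGroup F] [NormedSpace ℝ F] (f : E2 → F) (x : E2) : F :=
  ∑ i : Fin 2, iteratedFDeriv ℝ 2 f x ![EuclideanSpace.single i 1, EuclideanSpace.single i 1]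

open Filter

section RadialCalculus

variable {E : Type*} [NormedAddCommGroup E] [InnerProductSpace ℝ E]

theorem HasDerivAt.hasFDerivAt_comp_norm {h : ℝ → ℝ} {h' : ℝ} {ξ : E}
    (hd : HasDerivAt h h' ‖ξ‖) (hξ : ξ ≠ 0) :
    HasFDerivAt (fun x => h ‖x‖) ((h' * ‖ξ‖⁻¹) • innerSL ℝ ξ) ξ := by
  have hnorm : HasFDerivAt (fun x : E => ‖x‖) (‖ξ‖⁻¹ • innerSL ℝ ξ) ξ := by
    have := (hasStrictFDerivAt_norm_sq ξ).hasFDerivAt.sqrt (by simpa using hξ)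
    simp only [Real.sqrt_sq (norm_nonneg _)] at this
    refine this.congr_fderiv ?_
    ext v
    simp only [one_div, mul_inv_rev, smul_apply, coe_innerSL_apply, nsmul_eq_mul, Nat.cast_ofNat,
      smul_eq_mul]
    field_simp
  exact (hd.comp_hasFDerivAt ξ hnorm).congr_fderiv (by rw [smul_smul, mul_comm])

theorem inner_gradient_comp_norm [CompleteSpace E] {h : ℝ → ℝ} {ξ : E}
    (hd : DifferentiableAt ℝ h ‖ξ‖) (hξ : ξ ≠ 0) :
    inner ℝ ξ (gradient (fun x => h ‖x‖) ξ) = deriv h ‖ξ‖ * ‖ξ‖ := by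
  rw [gradient, real_inner_comm, InnerProductSpace.toDual_symm_apply,
    (hd.hasDerivAt.hasFDerivAt_comp_norm hξ).fderiv]
  simp only [smul_apply, innerSL_apply_apply, real_inner_self_eq_norm_sq, smul_eq_mul]
  field_simp [norm_ne_zero_iff.2 hξ]

theorem fderiv_fderiv_comp_norm_apply {u : ℝ → ℝ} (hu : Differentiable ℝ u)
    (hu' : Differentiable ℝ (deriv u)) {ξ : E} (hξ : ξ ≠ 0) (v : E) :
    fderiv ℝ (fderiv ℝ fun x => u ‖x‖) ξ v v =
      deriv u ‖ξ‖ / ‖ξ‖ * ‖v‖ ^ 2 +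
        (deriv (deriv u) ‖ξ‖ - deriv u ‖ξ‖ / ‖ξ‖) / ‖ξ‖ ^ 2 * inner ℝ ξ v ^ 2 := by
  have hρ : ‖ξ‖ ≠ 0 := norm_ne_zero_iff.2 hξ
  set φ : E → ℝ := fun x => deriv u ‖x‖ * ‖x‖⁻¹
  have hfderiv : fderiv ℝ (fun x => u ‖x‖) =ᶠ[nhds ξ] fun x => φ x • innerSL ℝ x := by
    filter_upwards [isOpen_ne.mem_nhds hξ] with x hx
    exact ((hu _).hasDerivAt.hasFDerivAt_comp_norm hx).fderiv
  have hφ : HasFDerivAt φ (((deriv (deriv u) ‖ξ‖ * ‖ξ‖⁻¹ + deriv u ‖ξ‖ * -(‖ξ‖ ^ 2)⁻¹) * ‖ξ‖⁻¹)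
      • innerSL ℝ ξ) ξ :=
    ((hu' _).hasDerivAt.mul (hasDerivAt_inv hρ)).hasFDerivAt_comp_norm hξ
  -- Over `ℝ` the conjugate-linear `innerSL` is linear, so it can be differentiated as a CLM.
  have hD := hφ.fun_smul (innerSL ℝ : E →L[ℝ] E →L[ℝ] ℝ).hasFDerivAt
  have hinner : ∀ x y : E, (innerSL ℝ : E →L[ℝ] E →L[ℝ] ℝ) x y = inner ℝ x y := fun _ _ => rfl
  rw [hfderiv.fderiv_eq, hD.fderiv]
  simp only [add_apply, smul_apply, ContinuousLinearMap.smulRight_apply, hinner,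
    real_inner_self_eq_norm_sq, smul_eq_mul, φ]
  field_simp
  ring

end RadialCalculus

theorem lap_comp_norm {u : ℝ → ℝ} (hu : Differentiable ℝ u) (hu' : Differentiable ℝ (deriv u))
    {ξ : E2} (hξ : ξ ≠ 0) :
    lap (fun x => u ‖x‖) ξ = deriv (deriv u) ‖ξ‖ + deriv u ‖ξ‖ / ‖ξ‖ := by
  have hρ : ‖ξ‖ ≠ 0 := norm_ne_zero_iff.2 hξ
  have hnorm_sq : ‖ξ‖ ^ 2 = ξ 0 ^ 2 + ξ 1 ^ 2 := by
    simp [EuclideanSpace.norm_sq_eq, Fin.sum_univ_two]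
  simp only [lap, iteratedFDeriv_two_apply, Matrix.cons_val_zero, Matrix.cons_val_one,
    fderiv_fderiv_comp_norm_apply hu hu' hξ, PiLp.norm_single, norm_one,
    EuclideanSpace.inner_single_right, Fin.sum_univ_two]
  simp only [one_pow, mul_one, one_mul, starRingEnd_apply, star_trivial]
  field_simp
  rw [hnorm_sq]
  ring

theorem integral_comp_norm_euclideanSpace_fin_two (f : ℝ → ℝ) :
    ∫ x : E2, f ‖x‖ = 2 * Real.pi * ∫ ρ in Ioi 0, ρ * f ρ := by
  rw [integral_fun_norm_addHaar, finrank_euclideanSpace_fin, measureReal_def,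
    EuclideanSpace.volume_ball_fin_two]
  simp [Real.pi_nonneg, mul_assoc]

namespace SchwartzMap

theorem integrable_mul {D : Type*} [NormedAddCommGroup D] [NormedSpace ℝ D] [MeasurableSpace D]
    [BorelSpace D] [SecondCountableTopology D] {μ : Measure D} [μ.HasTemperateGrowth]
    (f g : 𝓢(D, ℝ)) : Integrable (fun x => f x * g x) μ := by
  have h := (smulLeftCLM ℝ (⇑g) f).integrable (μ := μ)
  rw [smulLeftCLM_apply g.hasTemperateGrowth] at h
  simpa only [smul_eq_mul, mul_comm] using h

theorem differentiable_deriv {F : Type*} [NormedAddCommGroup F] [NormedSpace ℝ F] (f : 𝓢(ℝ, F)) :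
    Differentiable ℝ (deriv f) := by
  rw [← funext (derivCLM_apply ℝ f)]
  exact (derivCLM ℝ F f).differentiable

theorem tendsto_atTop {F : Type*} [NormedAddCommGroup F] [NormedSpace ℝ F] (f : 𝓢(ℝ, F)) :
    Tendsto f atTop (nhds 0) :=
  f.tendsto_cocompact.mono_left atTop_le_cocompact

theorem integral_Ioi_deriv_mul_add_half (u A : 𝓢(ℝ, ℝ)) (hA : A 0 = 0) :
    ∫ ρ in Ioi 0, deriv A ρ * (u ρ + A ρ / 2) = -∫ ρ in Ioi 0, A ρ * deriv u ρ := by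
  set G : ℝ → ℝ := fun ρ => A ρ * (u ρ + A ρ / 4)
  have hG : ∀ ρ, HasDerivAt G (deriv A ρ * (u ρ + A ρ / 2) + A ρ * deriv u ρ) ρ := fun ρ =>
    ((A.hasDerivAt ρ).fun_mul ((u.hasDerivAt ρ).fun_add ((A.hasDerivAt ρ).div_const 4))).congr_deriv
      (by ring)
  have hG_lim : Tendsto G atTop (nhds 0) := by
    simpa using A.tendsto_atTop.mul (u.tendsto_atTop.add (A.tendsto_atTop.div_const 4))
  have hint_deriv_mul : Integrable (fun ρ => deriv A ρ * (u ρ + A ρ / 2)) := by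
    have h := integrable_mul (μ := volume) (derivCLM ℝ ℝ A) (u + (2⁻¹ : ℝ) • A)
    simp only [derivCLM_apply, add_apply, smul_apply, smul_eq_mul] at h
    convert h using 3
    ring
  have hint_mul_deriv : Integrable (fun ρ => A ρ * deriv u ρ) := by
    simpa using integrable_mul (μ := volume) A (derivCLM ℝ ℝ u)
  have hFTC := integral_Ioi_of_hasDerivAt_of_tendsto (hG 0).continuousAt.continuousWithinAt
    (fun ρ _ => hG ρ) (hint_deriv_mul.add hint_mul_deriv).integrableOn hG_lim
  rw [integral_add hint_deriv_mul.integrableOn hint_mul_deriv.integrableOn] at hFTC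
  simp only [G, hA, zero_mul, sub_zero] at hFTC
  linarith

theorem integral_Ioi_deriv_id_mul_deriv_mul (u : 𝓢(ℝ, ℝ)) :
    ∫ ρ in Ioi 0, (ρ * deriv (deriv u) ρ + deriv u ρ) * (u ρ + ρ * deriv u ρ / 2) =
      -∫ ρ in Ioi 0, ρ * deriv u ρ ^ 2 := by
  set A := smulLeftCLM ℝ (fun ρ : ℝ => ρ) (derivCLM ℝ ℝ u)
  have hA : ∀ ρ, A ρ = ρ * deriv u ρ := by
    simp [A, smulLeftCLM_apply_apply Function.HasTemperateGrowth.id']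
  have hA' : ∀ ρ, deriv A ρ = ρ * deriv (deriv u) ρ + deriv u ρ := by
    intro ρ
    rw [show (A : ℝ → ℝ) = fun ρ => ρ * deriv u ρ from funext hA,
      ((hasDerivAt_id' ρ).fun_mul (u.differentiable_deriv ρ).hasDerivAt).deriv]
    ring
  simpa [hA, hA', pow_two, mul_assoc] using integral_Ioi_deriv_mul_add_half u A (by simp [hA])

theorem exists_eqOn_Ici_of_eq_comp_norm {E F : Type*} [NormedAddCommGroup E]
    [NormedSpace ℝ E] [Nontrivial E] [NormedAddCommGroup F] [NormedSpace ℝ F] (R : 𝓢(E, F))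
    {r : ℝ → F} (hR : ∀ x, R x = r ‖x‖) : ∃ w : 𝓢(ℝ, F), EqOn w r (Ici 0) := by
  obtain ⟨e, he⟩ := exists_norm_eq E zero_le_one
  set L := LinearIsometry.toSpanSingleton ℝ E he
  refine ⟨compCLMOfAntilipschitz ℝ L.toContinuousLinearMap.hasTemperateGrowth
    L.isometry.antilipschitz R, fun t (ht : 0 ≤ t) => ?_⟩
  simp [compCLMOfAntilipschitz, hR, L, norm_smul, he, abs_of_nonneg ht]

end SchwartzMap

theorem stmt1_general (R : SchwartzMap E2 ℝ) (r : ℝ → ℝ)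
    (hprof : ∀ x : E2, R x = r ‖x‖) :
    ∫ ξ : E2, lap (fun x => (R x) ^ 2) ξ *
        (R ξ * (R ξ + (inner ℝ ξ (gradient (fun x => R x) ξ) : ℝ)))
      = -2 * Real.pi * ∫ ρ in Ioi (0 : ℝ), (deriv (fun s => (r s) ^ 2) ρ) ^ 2 * ρ := by
  obtain ⟨w, hw⟩ := R.exists_eqOn_Ici_of_eq_comp_norm hprof
  have hRw : ∀ x, R x = w ‖x‖ := fun x => (hprof x).trans (hw (norm_nonneg x)).symm
  set u := SchwartzMap.smulLeftCLM ℝ (⇑w) w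
  have hu : ∀ t, u t = w t ^ 2 := by
    simp [u, SchwartzMap.smulLeftCLM_apply_apply w.hasTemperateGrowth, sq]
  have hu' : ∀ t, deriv u t = 2 * w t * deriv w t := by
    intro t
    rw [funext hu, ((w.hasDerivAt t).fun_pow 2).deriv]
    ring
  set F : ℝ → ℝ := fun ρ => (deriv (deriv u) ρ + deriv u ρ / ρ) * (w ρ * (w ρ + deriv w ρ * ρ))
  have hintegrand : (fun ξ : E2 => lap (fun x => (R x) ^ 2) ξ *
      (R ξ * (R ξ + (inner ℝ ξ (gradient (fun x => R x) ξ) : ℝ)))) =ᵐ[volume] fun ξ => F ‖ξ‖ := by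
    filter_upwards [Measure.ae_ne volume 0] with ξ hξ
    rw [show (fun x => R x ^ 2) = fun x => u ‖x‖ by simp [hRw, hu],
      show (fun x => R x) = fun x => w ‖x‖ from funext hRw,
      lap_comp_norm u.differentiable u.differentiable_deriv hξ,
      inner_gradient_comp_norm w.differentiableAt hξ, hRw]
  have hradial : ∫ ρ in Ioi 0, ρ * F ρ =
      ∫ ρ in Ioi 0, (ρ * deriv (deriv u) ρ + deriv u ρ) * (u ρ + ρ * deriv u ρ / 2) := by
    refine setIntegral_congr_fun measurableSet_Ioi fun ρ (hρ : 0 < ρ) => ?_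
    simp only [F, hu, hu']
    field_simp
  have hprofile_sq : ∫ ρ in Ioi 0, deriv (fun s => r s ^ 2) ρ ^ 2 * ρ =
      ∫ ρ in Ioi 0, ρ * deriv u ρ ^ 2 := by
    refine setIntegral_congr_fun measurableSet_Ioi fun ρ (hρ : 0 < ρ) => ?_
    have hloc : (fun s => r s ^ 2) =ᶠ[nhds ρ] u := by
      filter_upwards [Ioi_mem_nhds hρ] with s (hs : 0 < s)
      rw [hu, hw hs.le]
    rw [hloc.deriv_eq, mul_comm]
  rw [integral_congr_ae hintegrand, integral_comp_norm_euclideanSpace_fin_two, hradial,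
    u.integral_Ioi_deriv_id_mul_deriv_mul, hprofile_sq]
  ring

/-- For a smooth, radially symmetric, rapidly decaying `R : ℝ² → ℝ` with radial profile `r`,
`∫_{ℝ²} Δ(R²) · R · (R + ρ ∂_ρ R) dξ = −2π ∫₀^∞ ((R²)'(ρ))² ρ dρ`. -/
theorem stmt1 (R : SchwartzMap E2 ℝ) (r : ℝ → ℝ)
    (hrad : ∀ x y : E2, ‖x‖ = ‖y‖ → R x = R y)
    (hprof : ∀ x : E2, R x = r ‖x‖) :
    ∫ ξ : E2, lap (fun x => (R x) ^ 2) ξ *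
        (R ξ * (R ξ + (inner ℝ ξ (gradient (fun x => R x) ξ) : ℝ)))
      = -2 * Real.pi * ∫ ρ in Ioi (0 : ℝ), (deriv (fun s => (r s) ^ 2) ρ) ^ 2 * ρ :=
  stmt1_general R r hprof
end
end

section
/- Let R : ℝ² → ℝ be a smooth, radially symmetric, rapidly decaying function. Then ∫_{ℝ²} (Δ²(R²))·R·(R + ρ ∂_ρ R) dξ = (3/2) ∫_{ℝ²} (Δ(R²))² dξ. In particular this integral is nonnegative, and strictly positive unless R² is harmonic. -/
open MeasureTheory Set

noncomputable section

/-!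
Put `u = R²` and let `E` be the Euler operator `E f (x) = Df(x) x = ρ ∂_ρ f`, so that
`R (R + ρ ∂_ρ R) = u + E u / 2`. Integrating by parts, `∫ Δ²u · u = ∫ (Δu)²` and
`∫ Δ²u · E u = ∫ Δu · Δ(E u)`. The commutator identity `Δ (E u) = 2 Δu + E (Δu)` together with
`∫ w · E w = -(d/2) ∫ w²` (from `∫ E g = -d ∫ g`, an integration by parts against the coordinates)
gives `∫ Δ²u · E u = (2 - d/2) ∫ (Δu)²` in `ℝ^d`. For `d = 2` the integral is `3/2 ∫ (Δu)²`.
-/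

open LineDeriv Laplacian InnerProductSpace

namespace SchwartzMap

variable {E F : Type*} [NormedAddCommGroup E] [NormedAddCommGroup F] [NormedSpace ℝ F]

section Euler

variable [NormedSpace ℝ E]

def euler : 𝓢(E, F) →L[ℝ] 𝓢(E, F) :=
  bilinLeftCLM (ContinuousLinearMap.id ℝ (E →L[ℝ] F)) Function.HasTemperateGrowth.id' ∘L
    fderivCLM ℝ E F

theorem euler_apply (f : 𝓢(E, F)) (x : E) : euler f x = fderiv ℝ f x x := rfl

theorem lineDerivOp_euler (v : E) (f : 𝓢(E, F)) :
    ∂_{v} (euler f) = ∂_{v} f + euler (∂_{v} f) := by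
  ext x
  have hsymm : IsSymmSndFDerivAt ℝ f x := (f.smooth 2).contDiffAt.isSymmSndFDerivAt (by simp)
  have hdf : DifferentiableAt ℝ (fderiv ℝ f) x := (fderivCLM ℝ E F f).differentiableAt
  have h1 : fderiv ℝ (fun y => fderiv ℝ f y y) x v
      = fderiv ℝ f x v + fderiv ℝ (fderiv ℝ f) x v x := by
    rw [fderiv_clm_apply hdf differentiableAt_fun_id]; simp
  have h2 : fderiv ℝ (fun y => fderiv ℝ f y v) x x = fderiv ℝ (fderiv ℝ f) x x v := by
    rw [fderiv_clm_apply hdf (differentiableAt_const v)]; simp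
  show fderiv ℝ (fun y => fderiv ℝ f y y) x v
    = fderiv ℝ f x v + fderiv ℝ (fun y => fderiv ℝ f y v) x x
  rw [h1, h2, hsymm.eq]

theorem euler_pairing_mul (f g : 𝓢(E, ℝ)) (x : E) :
    euler (pairing (ContinuousLinearMap.mul ℝ ℝ) f g) x = euler f x * g x + f x * euler g x := by
  have hfg : fderiv ℝ (fun y => f y * g y) x = f x • fderiv ℝ g x + g x • fderiv ℝ f x :=
    fderiv_mul f.differentiableAt g.differentiableAt
  simp only [euler_apply, pairing_apply, ContinuousLinearMap.mul_apply', hfg, add_apply,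
    smul_apply, smul_eq_mul]
  ring

end Euler

section InnerProductSpace

variable [InnerProductSpace ℝ E]

theorem euler_apply_eq_sum {ι : Type*} [Fintype ι] (b : OrthonormalBasis ι ℝ E) (f : 𝓢(E, F))
    (x : E) : euler f x = ∑ i, ⟪b i, x⟫_ℝ • ∂_{b i} f x :=
  calc euler f x = fderiv ℝ f x (∑ i, ⟪b i, x⟫_ℝ • b i) := by rw [b.sum_repr']; rfl
    _ = _ := by simp [lineDerivOp_apply_eq_fderiv]

variable [FiniteDimensional ℝ E]

theorem laplacian_euler (f : 𝓢(E, F)) : Δ (euler f) = (2 : ℝ) • Δ f + euler (Δ f) := by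
  simp only [laplacian_eq_sum (stdOrthonormalBasis ℝ E), map_sum, Finset.smul_sum,
    ← Finset.sum_add_distrib]
  refine Finset.sum_congr rfl fun i _ => ?_
  rw [lineDerivOp_euler, lineDerivOp_add, lineDerivOp_euler, two_smul]
  abel

variable [MeasurableSpace E] [BorelSpace E] {μ : Measure E} [μ.IsAddHaarMeasure]

theorem integrable_mul_s3 (f g : 𝓢(E, ℝ)) : Integrable (fun x => f x * g x) μ :=
  (pairing (ContinuousLinearMap.mul ℝ ℝ) f g).integrable

theorem integrable_inner_smul (f : 𝓢(E, F)) (w : E) :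
    Integrable (fun x => ⟪w, x⟫_ℝ • f x) μ := by
  have hw : (fun x : E => ⟪w, x⟫_ℝ).HasTemperateGrowth := by fun_prop
  simpa [smulLeftCLM_apply hw] using (smulLeftCLM F (fun x : E => ⟪w, x⟫_ℝ) f).integrable (μ := μ)

theorem integral_inner_smul_lineDerivOp (f : 𝓢(E, F)) (v w : E) :
    ∫ x, ⟪w, x⟫_ℝ • ∂_{v} f x ∂μ = -(⟪w, v⟫_ℝ • ∫ x, f x ∂μ) := by
  rw [← integral_smul]
  refine integral_bilinear_hasLineDerivAt_right_eq_neg_left_of_integrable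
    (B := ContinuousLinearMap.lsmul ℝ ℝ) (f.integrable.smul ⟪w, v⟫_ℝ)
    (integrable_inner_smul _ w) (integrable_inner_smul f w)
    (fun x _ => ?_) (fun x _ => (f.hasFDerivAt x).hasLineDerivAt v)
  simpa using ((innerSL ℝ w).hasFDerivAt (x := x)).hasLineDerivAt v

theorem integral_euler (f : 𝓢(E, F)) :
    ∫ x, euler f x ∂μ = -((Module.finrank ℝ E : ℝ) • ∫ x, f x ∂μ) := by
  let b := stdOrthonormalBasis ℝ E
  simp_rw [euler_apply_eq_sum b, integral_finsetSum _ fun i _ => integrable_inner_smul _ (b i),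
    integral_inner_smul_lineDerivOp, real_inner_self_eq_norm_sq, b.norm_eq_one]
  simp [Nat.cast_smul_eq_nsmul]

theorem integral_mul_euler_self (w : 𝓢(E, ℝ)) :
    ∫ x, w x * euler w x ∂μ = -(Module.finrank ℝ E / 2 : ℝ) * ∫ x, w x ^ 2 ∂μ := by
  have h := integral_euler (μ := μ) (pairing (ContinuousLinearMap.mul ℝ ℝ) w w)
  simp only [euler_pairing_mul, pairing_apply_apply, ContinuousLinearMap.mul_apply',
    smul_eq_mul] at h
  simp only [mul_comm (euler w _), ← two_mul, integral_const_mul, ← sq] at h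
  linarith

theorem integral_laplacian_laplacian_mul_euler (u : 𝓢(E, ℝ)) :
    ∫ x, Δ (Δ u) x * euler u x ∂μ = (2 - Module.finrank ℝ E / 2 : ℝ) * ∫ x, Δ u x ^ 2 ∂μ := by
  have hΔ (x) : Δ u x * Δ (euler u) x = 2 * (Δ u x * Δ u x) + Δ u x * euler (Δ u) x := by
    rw [laplacian_euler]; simp only [add_apply, smul_apply, smul_eq_mul]; ring
  rw [← integral_mul_laplacian_right_eq_left, integral_congr_ae (ae_of_all _ hΔ),
    integral_add ((integrable_mul_s3 _ _).const_mul 2) (integrable_mul_s3 _ _), integral_const_mul,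
    integral_mul_euler_self]
  simp only [sq]
  ring

theorem integral_laplacian_laplacian_mul_add_half_euler (u : 𝓢(E, ℝ)) :
    ∫ x, Δ (Δ u) x * (u x + euler u x / 2) ∂μ
      = (2 - Module.finrank ℝ E / 4 : ℝ) * ∫ x, Δ u x ^ 2 ∂μ := by
  have hself : ∫ x, Δ (Δ u) x * u x ∂μ = ∫ x, Δ u x ^ 2 ∂μ := by
    simpa only [mul_comm, sq] using integral_mul_laplacian_right_eq_left (μ := μ) u (Δ u)
  have hsplit (x) : Δ (Δ u) x * (u x + euler u x / 2)
      = Δ (Δ u) x * u x + Δ (Δ u) x * euler u x / 2 := by ring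
  rw [integral_congr_ae (ae_of_all _ hsplit),
    integral_add (integrable_mul_s3 _ _) ((integrable_mul_s3 _ _).div_const 2), integral_div, hself,
    integral_laplacian_laplacian_mul_euler]
  ring

end InnerProductSpace

end SchwartzMap

open SchwartzMap

theorem lap_schwartzMap {F : Type*} [NormedAddCommGroup F] [NormedSpace ℝ F] (f : 𝓢(E2, F)) :
    lap f = ⇑(Δ f : 𝓢(E2, F)) := by
  funext x
  rw [laplacian_apply,
    laplacian_eq_iteratedFDeriv_orthonormalBasis _ (EuclideanSpace.basisFun (Fin 2) ℝ)]
  simp [lap]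

theorem stmt3_general (R : SchwartzMap E2 ℝ) :
    (∫ ξ : E2, lap (lap (fun x => (R x) ^ 2)) ξ *
        (R ξ * (R ξ + (inner ℝ ξ (gradient (fun x => R x) ξ) : ℝ)))
      = (3 / 2) * ∫ ξ : E2, (lap (fun x => (R x) ^ 2) ξ) ^ 2) ∧
    (0 ≤ ∫ ξ : E2, lap (lap (fun x => (R x) ^ 2)) ξ *
        (R ξ * (R ξ + (inner ℝ ξ (gradient (fun x => R x) ξ) : ℝ)))) ∧
    ((¬ ∀ x : E2, lap (fun x => (R x) ^ 2) x = 0) →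
      0 < ∫ ξ : E2, lap (lap (fun x => (R x) ^ 2)) ξ *
        (R ξ * (R ξ + (inner ℝ ξ (gradient (fun x => R x) ξ) : ℝ)))) := by
  set u := pairing (ContinuousLinearMap.mul ℝ ℝ) R R
  have hu : (fun x => R x ^ 2) = ⇑u := by funext x; simp [u, sq]
  have hweight (ξ : E2) :
      R ξ * (R ξ + inner ℝ ξ (gradient (fun x => R x) ξ)) = u ξ + euler u ξ / 2 := by
    rw [real_inner_comm, gradient, toDual_symm_apply, euler_pairing_mul]
    simp only [u, pairing_apply_apply, ContinuousLinearMap.mul_apply', euler_apply]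
    ring
  have hmain : ∫ ξ : E2, lap (lap (fun x => R x ^ 2)) ξ *
        (R ξ * (R ξ + inner ℝ ξ (gradient (fun x => R x) ξ)))
      = 3 / 2 * ∫ ξ, Δ u ξ ^ 2 := by
    simp_rw [hu, lap_schwartzMap, hweight]
    rw [integral_laplacian_laplacian_mul_add_half_euler, finrank_euclideanSpace_fin]
    norm_num
  rw [hmain, hu, lap_schwartzMap]
  refine ⟨rfl, by positivity, fun hΔ => ?_⟩
  obtain ⟨x, hx⟩ := not_forall.mp hΔ
  have hpos : 0 < ∫ ξ, Δ u ξ ^ 2 :=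
    integral_pos_of_integrable_nonneg_nonzero (by fun_prop)
      (by simpa only [sq] using integrable_mul_s3 (μ := volume) (Δ u) (Δ u))
      (fun ξ => sq_nonneg _) (pow_ne_zero 2 hx)
  positivity

/-- For a smooth, radially symmetric, rapidly decaying `R : ℝ² → ℝ`,
`∫ Δ²(R²) · R · (R + ρ ∂_ρ R) dξ = (3/2) ∫ (Δ(R²))² dξ`; in particular the integral is
nonnegative, and strictly positive unless `R²` is harmonic. -/
theorem stmt3 (R : SchwartzMap E2 ℝ)
    (hrad : ∀ x y : E2, ‖x‖ = ‖y‖ → R x = R y) :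
    (∫ ξ : E2, lap (lap (fun x => (R x) ^ 2)) ξ *
        (R ξ * (R ξ + (inner ℝ ξ (gradient (fun x => R x) ξ) : ℝ)))
      = (3 / 2) * ∫ ξ : E2, (lap (fun x => (R x) ^ 2) ξ) ^ 2) ∧
    (0 ≤ ∫ ξ : E2, lap (lap (fun x => (R x) ^ 2)) ξ *
        (R ξ * (R ξ + (inner ℝ ξ (gradient (fun x => R x) ξ) : ℝ)))) ∧
    ((¬ ∀ x : E2, lap (fun x => (R x) ^ 2) x = 0) →
      0 < ∫ ξ : E2, lap (lap (fun x => (R x) ^ 2)) ξ *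
        (R ξ * (R ξ + (inner ℝ ξ (gradient (fun x => R x) ξ) : ℝ)))) :=
  stmt3_general R
end
end

section
/- Suppose L : [0,T) → (0,∞) is C² and satisfies −L³L'' = β₀ − (c₁α²)/(2ML²) + (c₂α⁴)/(2ML⁴) − (c₃α⁶)/(2ML⁶) for positive constants β₀, c₁, c₂, c₃, α, M. Then E(t) = (L')² − β₀/L² + (c₁α²)/(4ML⁴) − (c₂α⁴)/(6ML⁶) + (c₃α⁶)/(8ML⁸) is constant, and consequently L(t) ≥ δ for some δ > 0 independent of t (L cannot reach zero). -/
open Set Filter Topology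

/-!
Writing the equation as `L'' = -F(L)/L³`, the energy is `E = (L')² + V(L)` for a potential `V`
with `V' = 2F/ℓ³`, so `E' = 2L'(L'' + F(L)/L³) = 0`. Since `E ≥ V(L)` and
`V(ℓ) ~ c₃α⁶/(8Mℓ⁸) → +∞` as `ℓ → 0⁺`, the constant value of `E` keeps `L` away from `0`.
-/

theorem Convex.eq_of_hasDerivWithinAt_zero {G : Type*} [NormedAddCommGroup G] [NormedSpace ℝ G]
    {s : Set ℝ} (hs : Convex ℝ s) {f : ℝ → G} (hf : ∀ x ∈ s, HasDerivWithinAt f 0 s x)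
    {x y : ℝ} (hx : x ∈ s) (hy : y ∈ s) : f y = f x := by
  simpa [sub_eq_zero] using
    hs.norm_image_sub_le_of_norm_hasDerivWithin_le hf (C := 0) (by simp) hx hy

theorem Convex.energy_eq_of_newton {s : Set ℝ} (hs : Convex ℝ s) {x x' x'' V V' : ℝ → ℝ}
    (hx : ∀ t ∈ s, HasDerivWithinAt x (x' t) s t)
    (hx' : ∀ t ∈ s, HasDerivWithinAt x' (x'' t) s t)
    (hV : ∀ t ∈ s, HasDerivAt V (V' (x t)) (x t))
    (hnewton : ∀ t ∈ s, 2 * x'' t + V' (x t) = 0) {t₀ t : ℝ} (ht₀ : t₀ ∈ s) (ht : t ∈ s) :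
    x' t ^ 2 + V (x t) = x' t₀ ^ 2 + V (x t₀) := by
  refine hs.eq_of_hasDerivWithinAt_zero (f := fun t ↦ x' t ^ 2 + V (x t)) (fun u hu ↦ ?_) ht₀ ht
  refine (((hx' u hu).pow 2).add ((hV u hu).comp_hasDerivWithinAt u (hx u hu))).congr_deriv ?_
  linear_combination x' u * hnewton u hu

noncomputable section Modulation

variable (β₀ c₁ c₂ c₃ α M : ℝ)

/-- The right-hand side `F` of the modulation equation `-L³ L'' = F(L)`. -/
def modulationForce (ℓ : ℝ) : ℝ :=
  β₀ - c₁ * α ^ 2 / (2 * M * ℓ ^ 2) + c₂ * α ^ 4 / (2 * M * ℓ ^ 4) - c₃ * α ^ 6 / (2 * M * ℓ ^ 6)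

def modulationPotential (ℓ : ℝ) : ℝ :=
  -β₀ / ℓ ^ 2 + c₁ * α ^ 2 / (4 * M * ℓ ^ 4) - c₂ * α ^ 4 / (6 * M * ℓ ^ 6)
    + c₃ * α ^ 6 / (8 * M * ℓ ^ 8)

variable {β₀ c₁ c₂ c₃ α M}

theorem hasDerivAt_modulationPotential (hM : M ≠ 0) {ℓ : ℝ} (hℓ : ℓ ≠ 0) :
    HasDerivAt (modulationPotential β₀ c₁ c₂ c₃ α M)
      (2 * modulationForce β₀ c₁ c₂ c₃ α M ℓ / ℓ ^ 3) ℓ := by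
  have hpow (n : ℕ) (c : ℝ) := ((hasDerivAt_pow n ℓ).const_mul c)
  have key := ((((hasDerivAt_const ℓ (-β₀)).div (hasDerivAt_pow 2 ℓ) (by positivity)).add
    ((hasDerivAt_const ℓ (c₁ * α ^ 2)).div (hpow 4 (4 * M)) (by positivity))).sub
    ((hasDerivAt_const ℓ (c₂ * α ^ 4)).div (hpow 6 (6 * M)) (by positivity))).add
    ((hasDerivAt_const ℓ (c₃ * α ^ 6)).div (hpow 8 (8 * M)) (by positivity))
  refine key.congr_deriv ?_
  simp only [modulationForce]
  field_simp
  ring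

theorem modulationPotential_eq_inv_pow_mul {ℓ : ℝ} (hℓ : ℓ ≠ 0) :
    modulationPotential β₀ c₁ c₂ c₃ α M ℓ = ℓ⁻¹ ^ 8 * (c₃ * α ^ 6 / (8 * M)
      - c₂ * α ^ 4 / (6 * M) * ℓ ^ 2 + c₁ * α ^ 2 / (4 * M) * ℓ ^ 4 - β₀ * ℓ ^ 6) := by
  simp only [modulationPotential]
  field_simp
  ring

theorem tendsto_modulationPotential_nhdsGT_zero (hc₃ : 0 < c₃) (hα : 0 < α)
    (hM : 0 < M) : Tendsto (modulationPotential β₀ c₁ c₂ c₃ α M) (𝓝[>] 0) atTop := by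
  have hpoly : Tendsto (fun ℓ : ℝ ↦ c₃ * α ^ 6 / (8 * M) - c₂ * α ^ 4 / (6 * M) * ℓ ^ 2
      + c₁ * α ^ 2 / (4 * M) * ℓ ^ 4 - β₀ * ℓ ^ 6) (𝓝[>] 0) (𝓝 (c₃ * α ^ 6 / (8 * M))) :=
    tendsto_nhdsWithin_of_tendsto_nhds (Continuous.tendsto' (by fun_prop) _ _ (by simp))
  refine ((tendsto_pow_atTop (by norm_num : (8 : ℕ) ≠ 0)).comp tendsto_inv_nhdsGT_zero
    |>.atTop_mul_pos (by positivity) hpoly).congr' ?_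
  filter_upwards [self_mem_nhdsWithin] with ℓ (hℓ : 0 < ℓ)
  exact (modulationPotential_eq_inv_pow_mul hℓ.ne').symm

end Modulation

theorem exists_pos_le_of_tendsto_nhdsGT_zero_atTop {f : ℝ → ℝ}
    (hf : Tendsto f (𝓝[>] 0) atTop) (C : ℝ) :
    ∃ δ > 0, ∀ ℓ > 0, f ℓ ≤ C → δ ≤ ℓ := by
  obtain ⟨δ, hδ, hlarge⟩ := mem_nhdsGT_iff_exists_Ioo_subset.mp (hf.eventually_gt_atTop C)
  exact ⟨δ, hδ, fun ℓ hℓ hfℓ ↦ not_lt.mp fun hℓδ ↦ (hlarge ⟨hℓ, hℓδ⟩).not_ge hfℓ⟩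

theorem stmt19_general (T β₀ c₁ c₂ c₃ α M : ℝ)
    (hc₃ : 0 < c₃) (hα : 0 < α) (hM : 0 < M)
    (L L' L'' : ℝ → ℝ)
    (hL : ∀ t ∈ Ico 0 T, 0 < L t)
    (hd1 : ∀ t ∈ Ico 0 T, HasDerivWithinAt L (L' t) (Ico 0 T) t)
    (hd2 : ∀ t ∈ Ico 0 T, HasDerivWithinAt L' (L'' t) (Ico 0 T) t)
    (heq : ∀ t ∈ Ico 0 T, -((L t) ^ 3 * L'' t)
      = β₀ - c₁ * α ^ 2 / (2 * M * (L t) ^ 2) + c₂ * α ^ 4 / (2 * M * (L t) ^ 4)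
        - c₃ * α ^ 6 / (2 * M * (L t) ^ 6)) :
    (∀ t ∈ Ico 0 T,
      (L' t) ^ 2 - β₀ / (L t) ^ 2 + c₁ * α ^ 2 / (4 * M * (L t) ^ 4)
          - c₂ * α ^ 4 / (6 * M * (L t) ^ 6) + c₃ * α ^ 6 / (8 * M * (L t) ^ 8)
        = (L' 0) ^ 2 - β₀ / (L 0) ^ 2 + c₁ * α ^ 2 / (4 * M * (L 0) ^ 4)
          - c₂ * α ^ 4 / (6 * M * (L 0) ^ 6) + c₃ * α ^ 6 / (8 * M * (L 0) ^ 8)) ∧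
    ∃ δ > 0, ∀ t ∈ Ico 0 T, δ ≤ L t := by
  set V := modulationPotential β₀ c₁ c₂ c₃ α M
  have hnewton (t : ℝ) (ht : t ∈ Ico 0 T) :
      2 * L'' t + 2 * modulationForce β₀ c₁ c₂ c₃ α M (L t) / L t ^ 3 = 0 := by
    have hF : modulationForce β₀ c₁ c₂ c₃ α M (L t) = -(L t ^ 3 * L'' t) := (heq t ht).symm
    have hLt := (hL t ht).ne'
    rw [hF]
    field_simp
    ring
  have henergy (t : ℝ) (ht : t ∈ Ico 0 T) : L' t ^ 2 + V (L t) = L' 0 ^ 2 + V (L 0) :=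
    (convex_Ico 0 T).energy_eq_of_newton
      (V' := fun ℓ ↦ 2 * modulationForce β₀ c₁ c₂ c₃ α M ℓ / ℓ ^ 3) hd1 hd2
      (fun u hu ↦ hasDerivAt_modulationPotential hM.ne' (hL u hu).ne') hnewton
      ⟨le_rfl, ht.1.trans_lt ht.2⟩ ht
  refine ⟨fun t ht ↦ ?_, ?_⟩
  · have h := henergy t ht
    simp only [V, modulationPotential] at h
    linear_combination h
  · obtain ⟨δ, hδ, hδle⟩ := exists_pos_le_of_tendsto_nhdsGT_zero_atTop
      (tendsto_modulationPotential_nhdsGT_zero hc₃ hα hM) (L' 0 ^ 2 + V (L 0))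
    exact ⟨δ, hδ, fun t ht ↦ hδle _ (hL t ht) (by linarith [henergy t ht, sq_nonneg (L' t)])⟩

/-- Third-order reduced modulation ODE: if `L : [0,T) → (0,∞)` is `C²`, bounded above, and
satisfies `−L³L'' = β₀ − c₁α²/(2ML²) + c₂α⁴/(2ML⁴) − c₃α⁶/(2ML⁶)` with positive constants,
then `E(t) = (L')² − β₀/L² + c₁α²/(4ML⁴) − c₂α⁴/(6ML⁶) + c₃α⁶/(8ML⁸)` is constant, and
consequently `L` is bounded below by a positive constant (it cannot reach zero). -/
theorem stmt19 (T β₀ c₁ c₂ c₃ α M : ℝ) (hT : 0 < T)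
    (hβ : 0 < β₀) (hc₁ : 0 < c₁) (hc₂ : 0 < c₂) (hc₃ : 0 < c₃) (hα : 0 < α) (hM : 0 < M)
    (L L' L'' : ℝ → ℝ)
    (hL : ∀ t ∈ Ico 0 T, 0 < L t)
    (hbdd : ∃ Y : ℝ, ∀ t ∈ Ico 0 T, L t ≤ Y)
    (hd1 : ∀ t ∈ Ico 0 T, HasDerivWithinAt L (L' t) (Ico 0 T) t)
    (hd2 : ∀ t ∈ Ico 0 T, HasDerivWithinAt L' (L'' t) (Ico 0 T) t)
    (hcont : ContinuousOn L'' (Ico 0 T))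
    (heq : ∀ t ∈ Ico 0 T, -((L t) ^ 3 * L'' t)
      = β₀ - c₁ * α ^ 2 / (2 * M * (L t) ^ 2) + c₂ * α ^ 4 / (2 * M * (L t) ^ 4)
        - c₃ * α ^ 6 / (2 * M * (L t) ^ 6)) :
    (∀ t ∈ Ico 0 T,
      (L' t) ^ 2 - β₀ / (L t) ^ 2 + c₁ * α ^ 2 / (4 * M * (L t) ^ 4)
          - c₂ * α ^ 4 / (6 * M * (L t) ^ 6) + c₃ * α ^ 6 / (8 * M * (L t) ^ 8)
        = (L' 0) ^ 2 - β₀ / (L 0) ^ 2 + c₁ * α ^ 2 / (4 * M * (L 0) ^ 4)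
          - c₂ * α ^ 4 / (6 * M * (L 0) ^ 6) + c₃ * α ^ 6 / (8 * M * (L 0) ^ 8)) ∧
    ∃ δ > 0, ∀ t ∈ Ico 0 T, δ ≤ L t :=
  stmt19_general T β₀ c₁ c₂ c₃ α M hc₃ hα hM L L' L'' hL hd1 hd2 heq
end
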